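/- arXiv:2406.07282 — 3 statements merged into one kernel-verified Lean document; each statement's English description precedes it below -/
import Mathlib

section
/- Let P be a row-stochastic nonnegative n×n matrix and Λ = diag(λ₁,...,λₙ) with λ_v ∈ [0,1]. If for every node v there is a path in the graph of P from v to some node s with λ_s < 1, then the spectral radius of ΛP is strictly less than 1. -/
attribute [local instance] Matrix.linftyOpNormedRing Matrix.linftyOpNormedAlgebra

theorem stmt_3 {n : ℕ} (P : Matrix (Fin n) (Fin n) ℝ)
    (hPnn : ∀ v w, 0 ≤ P v w)
    (hrow : ∀ v, ∑ w, P v w = 1)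
    (lam : Fin n → ℝ) (hlam : ∀ v, lam v ∈ Set.Icc (0:ℝ) 1)
    -- from every node v there is a path in the graph of P to some node s with lam s < 1
    (hpath : ∀ v, ∃ s, lam s < 1 ∧ Relation.ReflTransGen (fun a b => 0 < P a b) v s) :
    -- spectral radius of Λ P is strictly less than 1
    ∀ c ∈ spectrum ℂ ((Matrix.diagonal lam * P).map (algebraMap ℝ ℂ)), ‖c‖ < 1 := by
  intro c hc
  rcases Nat.eq_zero_or_pos n with hn | hn
  · -- trivial ring: spectrum is empty
    exfalso
    subst hn
    exact spectrum.notMem_iff.mpr (isUnit_of_subsingleton _) hc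
  haveI : Nonempty (Fin n) := ⟨⟨0, hn⟩⟩
  set M : Matrix (Fin n) (Fin n) ℝ := Matrix.diagonal lam * P with hM
  have hMentry : ∀ v w, M v w = lam v * P v w := by
    intro v w; simp [hM, Matrix.diagonal_mul]
  have hMnn : ∀ v w, 0 ≤ M v w := fun v w => by
    rw [hMentry]; exact mul_nonneg (hlam v).1 (hPnn v w)
  have hMrow : ∀ v, ∑ w, M v w = lam v := by
    intro v
    simp only [hMentry, ← Finset.mul_sum, hrow v, mul_one]
  -- nonnegativity of powers
  have hpow_nn : ∀ k v w, 0 ≤ (M ^ k) v w := by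
    intro k
    induction k with
    | zero => intro v w; by_cases h : v = w <;> simp [Matrix.one_apply, h]
    | succ k ih =>
      intro v w
      rw [pow_succ', Matrix.mul_apply]
      exact Finset.sum_nonneg fun u _ => mul_nonneg (hMnn v u) (ih u w)
  -- row sums of powers
  set r : ℕ → Fin n → ℝ := fun k v => ∑ w, (M ^ k) v w with hr
  have hrec : ∀ k v, r (k + 1) v = ∑ u, M v u * r k u := by
    intro k v
    simp only [hr, pow_succ', Matrix.mul_apply]
    rw [Finset.sum_comm]
    simp [Finset.mul_sum]
  have hr0 : ∀ v, r 0 v = 1 := by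
    intro v; simp [hr, Matrix.one_apply]
  have hle1 : ∀ k v, r k v ≤ 1 := by
    intro k
    induction k with
    | zero => intro v; rw [hr0]
    | succ k ih =>
      intro v
      rw [hrec]
      calc ∑ u, M v u * r k u ≤ ∑ u, M v u * 1 := by
            gcongr with u
            exacts [hMnn v u, ih u]
        _ = lam v := by simp [hMrow v]
        _ ≤ 1 := (hlam v).2
  have hmono : ∀ k v, r (k + 1) v ≤ r k v := by
    intro k
    induction k with
    | zero =>
      intro v
      rw [hr0]
      exact hle1 1 v
    | succ k ih =>
      intro v
      rw [hrec, hrec]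
      gcongr with u
      exacts [hMnn v u, ih u]
  have hanti : ∀ v, Antitone fun k => r k v := fun v =>
    antitone_nat_of_succ_le fun k => hmono k v
  -- existence of a power with row sum < 1
  have hlt : ∀ v, ∃ k, r k v < 1 := by
    intro v
    obtain ⟨s, hs, hpath⟩ := hpath v
    induction hpath using Relation.ReflTransGen.head_induction_on with
    | refl =>
      refine ⟨1, ?_⟩
      have : r 1 s = lam s := by rw [hrec]; simp [hr0, hMrow]
      rw [this]; exact hs
    | @head a b hab _ ih =>
      obtain ⟨k, hk⟩ := ih
      refine ⟨k + 1, ?_⟩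
      rw [hrec]
      simp only [hMentry]
      rcases eq_or_lt_of_le (hlam a).1 with h0 | h0
      · simp [← h0]
      · have hsum : ∑ u, P a u * r k u < 1 := by
          calc ∑ u, P a u * r k u < ∑ u, P a u := by
                apply Finset.sum_lt_sum
                · intro u _
                  calc P a u * r k u ≤ P a u * 1 :=
                        mul_le_mul_of_nonneg_left (hle1 k u) (hPnn a u)
                    _ = P a u := mul_one _
                · exact ⟨b, Finset.mem_univ b, by
                    calc P a b * r k b < P a b * 1 := by
                          exact mul_lt_mul_of_pos_left hk hab
                      _ = P a b := mul_one _⟩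
            _ = 1 := hrow a
        calc ∑ u, lam a * P a u * r k u = lam a * ∑ u, P a u * r k u := by
              rw [Finset.mul_sum]; simp [mul_assoc]
          _ < lam a * 1 := mul_lt_mul_of_pos_left hsum h0
          _ ≤ 1 := by rw [mul_one]; exact (hlam a).2
  choose kk hkk using hlt
  set K : ℕ := Finset.univ.sup kk + 1 with hKdef
  have hKpos : 0 < K := Nat.succ_pos _
  have hKlt : ∀ v, r K v < 1 := by
    intro v
    have h1 : kk v ≤ K := le_trans (Finset.le_sup (Finset.mem_univ v)) (Nat.le_succ _)
    exact lt_of_le_of_lt (hanti v h1) (hkk v)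
  -- pass to the complex matrix
  set A : Matrix (Fin n) (Fin n) ℂ := M.map (algebraMap ℝ ℂ) with hA
  have hcK : c ^ K ∈ spectrum ℂ (A ^ K) :=
    spectrum.pow_image_subset A K ⟨c, hc, rfl⟩
  have hApow : A ^ K = (M ^ K).map (algebraMap ℝ ℂ) := by
    have : A = (algebraMap ℝ ℂ).mapMatrix M := rfl
    rw [this, ← map_pow]; rfl
  have hnorm : ‖A ^ K‖ < 1 := by
    rw [hApow, Matrix.linfty_opNorm_def]
    have : ((Finset.univ.sup fun i => ∑ j, ‖((M ^ K).map (algebraMap ℝ ℂ)) i j‖₊ : NNReal) : ℝ)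
        < ((1 : NNReal) : ℝ) := by
      rw [NNReal.coe_lt_coe]
      rw [Finset.sup_lt_iff (by norm_num : (⊥ : NNReal) < 1)]
      intro i _
      have : ((∑ j, ‖((M ^ K).map (algebraMap ℝ ℂ)) i j‖₊ : NNReal) : ℝ) < ((1 : NNReal) : ℝ) := by
        push_cast
        have : ∀ j, ‖((M ^ K).map (algebraMap ℝ ℂ)) i j‖ = (M ^ K) i j := by
          intro j
          simp only [Matrix.map_apply]
          rw [show (algebraMap ℝ ℂ) ((M ^ K) i j) = ((M ^ K) i j : ℂ) from rfl]
          rw [Complex.norm_real]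
          exact abs_of_nonneg (hpow_nn K i j)
        simp only [this]
        exact hKlt i
      exact_mod_cast this
    exact_mod_cast this
  have hcKnorm : ‖c ^ K‖ < 1 :=
    lt_of_le_of_lt (spectrum.norm_le_norm_of_mem hcK) hnorm
  by_contra h
  push_neg at h
  have : (1 : ℝ) ≤ ‖c ^ K‖ := by
    rw [norm_pow]
    exact one_le_pow₀ h
  linarith
end

section
/- Under the same assumptions (P row-stochastic nonnegative, λ_v ∈ [0,1], every node has a path to a node s with λ_s < 1), the matrix I - ΛP is invertible. -/
/-!
Maximum principle: a kernel vector `x` of `1 - ΛP` satisfies `x = ΛPx`, so `|x|` is subharmonic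
for the stochastic matrix `P`. Hence `|x|` is constant along the paths of `P` starting at a
maximiser, and in particular is maximal at some `s` with `λ_s < 1`; but there
`|x s| ≤ λ_s ‖x‖_∞ < ‖x‖_∞` unless `x = 0`.
-/

open Finset Matrix

variable {ι : Type*} [Fintype ι]

lemma sum_mul_le_of_forall_le {w f : ι → ℝ} {M : ℝ} (hw : ∀ i, 0 ≤ w i) (hsum : ∑ i, w i = 1)
    (hf : ∀ i, f i ≤ M) : ∑ i, w i * f i ≤ M :=
  calc ∑ i, w i * f i ≤ ∑ i, w i * M :=
        sum_le_sum fun i _ => mul_le_mul_of_nonneg_left (hf i) (hw i)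
    _ = M := by rw [← sum_mul, hsum, one_mul]

lemma eq_of_le_sum_mul {w f : ι → ℝ} {M : ℝ} (hw : ∀ i, 0 ≤ w i) (hsum : ∑ i, w i = 1)
    (hf : ∀ i, f i ≤ M) (hM : M ≤ ∑ i, w i * f i) {j : ι} (hj : 0 < w j) : f j = M := by
  have hgap : ∑ i, w i * (M - f i) = 0 := by
    simp only [mul_sub, sum_sub_distrib, ← sum_mul, hsum, one_mul]
    linarith [sum_mul_le_of_forall_le hw hsum hf]
  have hj0 := (sum_eq_zero_iff_of_nonneg fun i _ => mul_nonneg (hw i) (sub_nonneg.2 (hf i))).1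
    hgap j (mem_univ j)
  linarith [(mul_eq_zero.1 hj0).resolve_left hj.ne']

lemma abs_mulVec_le_sum_mul_abs {P : Matrix ι ι ℝ} (hP : ∀ i j, 0 ≤ P i j) (x : ι → ℝ) (i : ι) :
    |(P *ᵥ x) i| ≤ ∑ j, P i j * |x j| :=
  calc |(P *ᵥ x) i| ≤ ∑ j, |P i j * x j| := abs_sum_le_sum_abs _ _
    _ = ∑ j, P i j * |x j| := by simp only [abs_mul, abs_of_nonneg (hP i _)]

/-- Discrete maximum principle. -/
theorem apply_eq_of_forall_le_of_reflTransGen {P : Matrix ι ι ℝ} (hP : ∀ i j, 0 ≤ P i j)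
    (hrow : ∀ i, ∑ j, P i j = 1) {f : ι → ℝ} (hf : ∀ i, f i ≤ ∑ j, P i j * f j) {a b : ι}
    (ha : ∀ i, f i ≤ f a) (hab : Relation.ReflTransGen (fun i j => 0 < P i j) a b) :
    f b = f a := by
  induction hab with
  | refl => rfl
  | tail _ hcd ih =>
    rw [← ih] at ha ⊢
    exact eq_of_le_sum_mul (hP _) (hrow _) ha (hf _) hcd

variable [DecidableEq ι]

lemma apply_eq_mul_mulVec_of_mulVec_eq_zero {P : Matrix ι ι ℝ} {lam x : ι → ℝ}
    (hx : (1 - diagonal lam * P) *ᵥ x = 0) (i : ι) : x i = lam i * (P *ᵥ x) i := by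
  have h := congrFun hx i
  rwa [sub_mulVec, one_mulVec, ← mulVec_mulVec, Pi.sub_apply, mulVec_diagonal, Pi.zero_apply,
    sub_eq_zero] at h

lemma abs_le_mul_sum_mul_abs_of_mulVec_eq_zero {P : Matrix ι ι ℝ} (hP : ∀ i j, 0 ≤ P i j)
    {lam x : ι → ℝ} (hlam : ∀ i, 0 ≤ lam i) (hx : (1 - diagonal lam * P) *ᵥ x = 0) (i : ι) :
    |x i| ≤ lam i * ∑ j, P i j * |x j| := by
  rw [apply_eq_mul_mulVec_of_mulVec_eq_zero hx i, abs_mul, abs_of_nonneg (hlam i)]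
  exact mul_le_mul_of_nonneg_left (abs_mulVec_le_sum_mul_abs hP x i) (hlam i)

theorem eq_zero_of_one_sub_diagonal_mul_mulVec_eq_zero {P : Matrix ι ι ℝ} (hP : ∀ i j, 0 ≤ P i j)
    (hrow : ∀ i, ∑ j, P i j = 1) {lam : ι → ℝ} (hlam : ∀ i, lam i ∈ Set.Icc (0 : ℝ) 1)
    (hpath : ∀ i, ∃ s, lam s < 1 ∧ Relation.ReflTransGen (fun a b => 0 < P a b) i s)
    {x : ι → ℝ} (hx : (1 - diagonal lam * P) *ᵥ x = 0) : x = 0 := by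
  by_contra hx0
  obtain ⟨i₀, hi₀⟩ := Function.ne_iff.1 hx0
  obtain ⟨a, -, ha⟩ := exists_max_image univ (fun i => |x i|) ⟨i₀, mem_univ i₀⟩
  have hmax : ∀ i, |x i| ≤ |x a| := fun i => ha i (mem_univ i)
  have hsub (i : ι) : |x i| ≤ lam i * ∑ j, P i j * |x j| :=
    abs_le_mul_sum_mul_abs_of_mulVec_eq_zero hP (fun i => (hlam i).1) hx i
  obtain ⟨s, hs, has⟩ := hpath a
  have hxs : |x s| = |x a| := apply_eq_of_forall_le_of_reflTransGen hP hrow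
    (fun i => (hsub i).trans (mul_le_of_le_one_left (sum_nonneg fun j _ =>
      mul_nonneg (hP i j) (abs_nonneg _)) (hlam i).2)) hmax has
  have hpos : 0 < |x a| := (abs_pos.2 hi₀).trans_le (hmax i₀)
  have : |x s| < |x a| :=
    calc |x s| ≤ lam s * |x a| :=
          (hsub s).trans (mul_le_mul_of_nonneg_left (sum_mul_le_of_forall_le (hP s) (hrow s) hmax)
            (hlam s).1)
      _ < |x a| := mul_lt_of_lt_one_left hpos hs
  exact this.ne hxs

theorem stmt_4 {n : ℕ} (P : Matrix (Fin n) (Fin n) ℝ)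
    (hPnn : ∀ v w, 0 ≤ P v w)
    (hrow : ∀ v, ∑ w, P v w = 1)
    (lam : Fin n → ℝ) (hlam : ∀ v, lam v ∈ Set.Icc (0:ℝ) 1)
    (hpath : ∀ v, ∃ s, lam s < 1 ∧ Relation.ReflTransGen (fun a b => 0 < P a b) v s) :
    IsUnit (1 - Matrix.diagonal lam * P) := by
  rw [isUnit_iff_isUnit_det, isUnit_iff_ne_zero, Ne, ← exists_mulVec_eq_zero_iff]
  rintro ⟨x, hx0, hx⟩
  exact hx0 (eq_zero_of_one_sub_diagonal_mul_mulVec_eq_zero hPnn hrow hlam hpath hx)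
end

section
/- If u₀ ∈ [0,1]ⁿ, P is row-stochastic nonnegative, Λ = diag(λ) with λ_v ∈ [0,1], and I - ΛP is invertible, then the equilibrium x* = (I - ΛP)⁻¹(I - Λ)u₀ satisfies x* ∈ [0,1]ⁿ, i.e., each component x*_v ∈ [0,1]. -/
open Matrix

private lemma bound_aux {n : ℕ} (P : Matrix (Fin n) (Fin n) ℝ)
    (hPnn : ∀ v w, 0 ≤ P v w) (hrow : ∀ v, ∑ w, P v w = 1)
    (lam : Fin n → ℝ) (hlam : ∀ v, lam v ∈ Set.Icc (0:ℝ) 1)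
    (u0 : Fin n → ℝ) (hu0 : ∀ v, u0 v ∈ Set.Icc (0:ℝ) 1)
    (t : ℝ) (ht0 : 0 ≤ t) (ht1 : t < 1) (x : Fin n → ℝ)
    (hx : ∀ v, x v = t * (lam v * (P *ᵥ x) v) + (1 - lam v) * u0 v) :
    ∀ v, x v ∈ Set.Icc (0:ℝ) 1 := by
  intro v
  haveI : Nonempty (Fin n) := ⟨v⟩
  obtain ⟨v0, hv0⟩ := Finite.exists_max x
  obtain ⟨v1, hv1⟩ := Finite.exists_min x
  constructor
  · -- lower bound
    have hPx : x v1 ≤ (P *ᵥ x) v1 := by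
      have : ∑ w, P v1 w * x v1 ≤ ∑ w, P v1 w * x w :=
        Finset.sum_le_sum fun w _ => mul_le_mul_of_nonneg_left (hv1 w) (hPnn v1 w)
      calc x v1 = ∑ w, P v1 w * x v1 := by
            rw [← Finset.sum_mul, hrow, one_mul]
        _ ≤ _ := this
    have h1 := hx v1
    have hl := hlam v1
    have hu := hu0 v1
    have htl : t * lam v1 < 1 :=
      lt_of_le_of_lt (mul_le_of_le_one_right ht0 hl.2) ht1
    have key : 0 ≤ x v1 * (1 - t * lam v1) := by
      nlinarith [mul_le_mul_of_nonneg_left hPx (mul_nonneg ht0 hl.1),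
        mul_nonneg (sub_nonneg.2 hl.2) hu.1]
    have hpos : 0 < 1 - t * lam v1 := by linarith
    have : 0 ≤ x v1 := le_of_mul_le_mul_right (by linarith) hpos
    exact le_trans this (hv1 v)
  · -- upper bound
    have hPx : (P *ᵥ x) v0 ≤ x v0 := by
      have : ∑ w, P v0 w * x w ≤ ∑ w, P v0 w * x v0 :=
        Finset.sum_le_sum fun w _ => mul_le_mul_of_nonneg_left (hv0 w) (hPnn v0 w)
      calc (P *ᵥ x) v0 ≤ ∑ w, P v0 w * x v0 := this
        _ = x v0 := by rw [← Finset.sum_mul, hrow, one_mul]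
    have h1 := hx v0
    have hl := hlam v0
    have hu := hu0 v0
    have htl : t * lam v0 < 1 :=
      lt_of_le_of_lt (mul_le_of_le_one_right ht0 hl.2) ht1
    have htl2 : t * lam v0 ≤ lam v0 := mul_le_of_le_one_left hl.1 ht1.le
    have key : x v0 * (1 - t * lam v0) ≤ 1 - t * lam v0 := by
      nlinarith [mul_le_mul_of_nonneg_left hPx (mul_nonneg ht0 hl.1),
        mul_le_of_le_one_right (sub_nonneg.2 hl.2) hu.2]
    have hpos : 0 < 1 - t * lam v0 := by linarith
    have : x v0 ≤ 1 := le_of_mul_le_mul_right (by linarith) hpos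
    exact le_trans (hv0 v) this

private lemma unit_aux {n : ℕ} (P : Matrix (Fin n) (Fin n) ℝ)
    (hPnn : ∀ v w, 0 ≤ P v w) (hrow : ∀ v, ∑ w, P v w = 1)
    (lam : Fin n → ℝ) (hlam : ∀ v, lam v ∈ Set.Icc (0:ℝ) 1)
    (t : ℝ) (ht0 : 0 ≤ t) (ht1 : t < 1) :
    IsUnit (1 - t • (Matrix.diagonal lam * P)).det := by
  rw [isUnit_iff_ne_zero]
  intro hdet
  obtain ⟨y, hy0, hy⟩ := (Matrix.exists_mulVec_eq_zero_iff).2 hdet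
  haveI : Nonempty (Fin n) := by
    by_contra h
    exact hy0 (funext fun v => absurd ⟨v⟩ h)
  obtain ⟨v0, hv0⟩ := Finite.exists_max (fun v => |y v|)
  have hM : 0 < |y v0| := by
    rcases Function.ne_iff.1 hy0 with ⟨w, hw⟩
    exact lt_of_lt_of_le (abs_pos.2 hw) (hv0 w)
  have hcomp : y v0 = t * (lam v0 * (P *ᵥ y) v0) := by
    have := congrFun hy v0
    simp only [sub_mulVec, one_mulVec, smul_mulVec, ← mulVec_mulVec,
      mulVec_diagonal, Pi.sub_apply, Pi.smul_apply, smul_eq_mul, Pi.zero_apply] at this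
    linarith
  have hPy : |(P *ᵥ y) v0| ≤ |y v0| := by
    have hexp : (P *ᵥ y) v0 = ∑ w, P v0 w * y w := rfl
    rw [hexp]
    calc |∑ w, P v0 w * y w| ≤ ∑ w, |P v0 w * y w| := Finset.abs_sum_le_sum_abs _ _
      _ ≤ ∑ w, P v0 w * |y v0| := by
          refine Finset.sum_le_sum fun w _ => ?_
          rw [abs_mul, abs_of_nonneg (hPnn v0 w)]
          exact mul_le_mul_of_nonneg_left (hv0 w) (hPnn v0 w)
      _ = |y v0| := by rw [← Finset.sum_mul, hrow, one_mul]
  have hl := hlam v0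
  have : |y v0| ≤ t * |y v0| := by
    calc |y v0| = t * (lam v0 * |(P *ᵥ y) v0|) := by
          rw [hcomp, abs_mul, abs_mul, abs_of_nonneg ht0, abs_of_nonneg hl.1]
      _ ≤ t * (1 * |y v0|) := by
          refine mul_le_mul_of_nonneg_left ?_ ht0
          exact mul_le_mul hl.2 hPy (abs_nonneg _) zero_le_one
      _ = t * |y v0| := by ring
  nlinarith

theorem stmt_8 {n : ℕ} (P : Matrix (Fin n) (Fin n) ℝ)
    (hPnn : ∀ v w, 0 ≤ P v w) (hrow : ∀ v, ∑ w, P v w = 1)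
    (lam : Fin n → ℝ) (hlam : ∀ v, lam v ∈ Set.Icc (0:ℝ) 1)
    (u0 : Fin n → ℝ) (hu0 : ∀ v, u0 v ∈ Set.Icc (0:ℝ) 1)
    (hinv : IsUnit (1 - Matrix.diagonal lam * P)) :
    ∀ v, ((1 - Matrix.diagonal lam * P)⁻¹ *ᵥ ((1 - Matrix.diagonal lam) *ᵥ u0)) v
      ∈ Set.Icc (0:ℝ) 1 := by
  intro v
  set Q : Matrix (Fin n) (Fin n) ℝ := Matrix.diagonal lam * P with hQ
  set b : Fin n → ℝ := (1 - Matrix.diagonal lam) *ᵥ u0 with hb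
  set g : ℝ → ℝ := fun t => ((1 - t • Q)⁻¹ *ᵥ b) v with hg
  -- the goal is g 1
  have hgoal : ((1 - Matrix.diagonal lam * P)⁻¹ *ᵥ ((1 - Matrix.diagonal lam) *ᵥ u0)) v = g 1 := by
    simp [hg, hQ, hb]
  rw [hgoal]
  -- determinant at t = 1 is nonzero
  have hdet1 : (1 - Q).det ≠ 0 := by
    have := (Matrix.isUnit_iff_isUnit_det _).1 hinv
    exact isUnit_iff_ne_zero.1 this
  -- continuity of g at 1
  have hcont : ContinuousAt g 1 := by
    have c1 : Continuous fun t : ℝ => (1 : Matrix (Fin n) (Fin n) ℝ) - t • Q :=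
      continuous_const.sub (continuous_id.smul continuous_const)
    have c2 : ContinuousAt Inv.inv ((1 : Matrix (Fin n) (Fin n) ℝ) - (1:ℝ) • Q) := by
      rw [one_smul]
      refine continuousAt_matrix_inv _ ?_
      rw [Ring.inverse_eq_inv']
      exact continuousAt_inv₀ hdet1
    have c3 : Continuous fun M : Matrix (Fin n) (Fin n) ℝ => (M *ᵥ b) v :=
      (continuous_apply v).comp (continuous_id.matrix_mulVec continuous_const)
    have c12 : ContinuousAt (fun t : ℝ => (1 - t • Q)⁻¹) 1 :=
      ContinuousAt.comp (g := Inv.inv) (f := fun t : ℝ => 1 - t • Q) (x := (1:ℝ)) c2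
        c1.continuousAt
    exact ContinuousAt.comp (g := fun M : Matrix (Fin n) (Fin n) ℝ => (M *ᵥ b) v)
      (f := fun t : ℝ => (1 - t • Q)⁻¹) (x := (1:ℝ)) c3.continuousAt c12
  -- g t ∈ Icc 0 1 for t ∈ [0,1)
  have hmem : ∀ t : ℝ, 0 ≤ t → t < 1 → g t ∈ Set.Icc (0:ℝ) 1 := by
    intro t ht0 ht1
    have hdet := unit_aux P hPnn hrow lam hlam t ht0 ht1
    set x : Fin n → ℝ := (1 - t • Q)⁻¹ *ᵥ b with hxdef
    have hfix : (1 - t • Q) *ᵥ x = b := by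
      rw [hxdef, mulVec_mulVec, Matrix.mul_nonsing_inv _ hdet, one_mulVec]
    have hx : ∀ w, x w = t * (lam w * (P *ᵥ x) w) + (1 - lam w) * u0 w := by
      intro w
      have := congrFun hfix w
      simp only [sub_mulVec, one_mulVec, smul_mulVec, hQ, ← mulVec_mulVec,
        mulVec_diagonal, Pi.sub_apply, Pi.smul_apply, smul_eq_mul, hb] at this ⊢
      linarith
    exact bound_aux P hPnn hrow lam hlam u0 hu0 t ht0 ht1 x hx v
  -- take the limit t → 1⁻
  have htend : Filter.Tendsto g (nhdsWithin 1 (Set.Iio 1)) (nhds (g 1)) :=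
    hcont.tendsto.mono_left nhdsWithin_le_nhds
  have hev : ∀ᶠ t in nhdsWithin 1 (Set.Iio 1), g t ∈ Set.Icc (0:ℝ) 1 := by
    filter_upwards [Ioo_mem_nhdsLT_of_mem (Set.mem_Ioc.2 ⟨(by norm_num : (0:ℝ) < 1), le_refl 1⟩)]
      with t ht
    exact hmem t (le_of_lt ht.1) ht.2
  exact isClosed_Icc.mem_of_tendsto htend hev
end
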